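/- Let (Z,d,ν) be a doubling metric measure space with relative lower volume decay of order Q > 0, i.e., ν(B(z,r'))/ν(B(z,r)) ≥ C^{-1}(r'/r)^Q for all z and 0 < r' ≤ r. Let β > 0 and suppose the uniformized measure μ_β on X̄_ρ satisfies: μ_β(B_ρ(x,r)) ≍ r^β ν(B_Z(z,r)) when r ≥ d_ρ(x) (z a nearest boundary point), and μ_β(B_ρ(x,r)) ≍ r·d_ρ(x)^{β-1} ν(B(v)) when r ≤ d_ρ(x) (v a nearest vertex). Then μ_β has relative lower volume decay of order Q_β = max{1, Q+β} on X̄_ρ. -/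

import Mathlib

open MeasureTheory
open Set
open scoped ENNReal

/-!
Below `d_ρ(x)` the comparison makes `μ_β(B(x,r))` proportional to `r`, which has lower
decay of order `1`; above `d_ρ(x)` it makes it comparable to `r^β ν(B(z,r))`, which has
lower decay of order `Q + β`. Both estimates hold with the common exponent
`max {1, Q + β}`, and for `r' ≤ d_ρ(x) ≤ r` they chain through the radius `d_ρ(x)`.
-/

/-- Relative lower volume decay of order `q`, for radii in `I`, of `m r = μ(B(x, r))` at a
fixed centre `x`. -/
def LowerDecayOn (m : ℝ → ℝ≥0∞) (K q : ℝ) (I : Set ℝ) : Prop :=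
  ∀ ⦃s t : ℝ⦄, 0 < s → s ≤ t → s ∈ I → t ∈ I →
    m t ≤ ENNReal.ofReal (K * (t / s) ^ q) * m s

namespace LowerDecayOn

variable {m : ℝ → ℝ≥0∞} {K q : ℝ} {I : Set ℝ}

theorem mono {K' q' : ℝ} (h : LowerDecayOn m K q I) (hK : K ≤ K') (hq : q ≤ q')
    (hK0 : 0 ≤ K) : LowerDecayOn m K' q' I := by
  intro s t hs hst hsI htI
  refine (h hs hst hsI htI).trans (mul_le_mul_left (ENNReal.ofReal_le_ofReal ?_) _)
  have hts : 1 ≤ t / s := (one_le_div hs).mpr hst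
  have hK'0 : 0 ≤ K' := hK0.trans hK
  gcongr

theorem of_comparable {f : ℝ → ℝ≥0∞} {C : ℝ} (hf : LowerDecayOn f K q I)
    (hC : 0 ≤ C) (hK : 0 ≤ K)
    (hfm : ∀ r ∈ I, 0 < r → f r ≤ ENNReal.ofReal C * m r)
    (hmf : ∀ r ∈ I, 0 < r → m r ≤ ENNReal.ofReal C * f r) :
    LowerDecayOn m (C ^ 2 * K) q I := by
  intro s t hs hst hsI htI
  calc m t ≤ ENNReal.ofReal C * f t := hmf t htI (hs.trans_le hst)
    _ ≤ ENNReal.ofReal C * (ENNReal.ofReal (K * (t / s) ^ q) * f s) := by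
        gcongr
        exact hf hs hst hsI htI
    _ ≤ ENNReal.ofReal C * (ENNReal.ofReal (K * (t / s) ^ q) * (ENNReal.ofReal C * m s)) := by
        gcongr
        exact hfm s hsI hs
    _ = ENNReal.ofReal (C ^ 2 * K * (t / s) ^ q) * m s := by
        rw [ENNReal.ofReal_mul (by positivity : 0 ≤ C ^ 2 * K),
          ENNReal.ofReal_mul (by positivity : 0 ≤ C ^ 2), ENNReal.ofReal_mul hK,
          ENNReal.ofReal_pow hC]
        ring

theorem rpow_mul {F : ℝ → ℝ≥0∞} (h : LowerDecayOn F K q I) (hK : 0 ≤ K) (β : ℝ) :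
    LowerDecayOn (fun r => ENNReal.ofReal (r ^ β) * F r) K (q + β) I := by
  intro s t hs hst hsI htI
  have ht : 0 < t := hs.trans_le hst
  have hsplit : t ^ β * (K * (t / s) ^ q) = K * (t / s) ^ (q + β) * s ^ β := by
    rw [Real.rpow_add (div_pos ht hs), Real.div_rpow ht.le hs.le β]
    field_simp
  calc ENNReal.ofReal (t ^ β) * F t
      ≤ ENNReal.ofReal (t ^ β) * (ENNReal.ofReal (K * (t / s) ^ q) * F s) := by
        gcongr
        exact h hs hst hsI htI
    _ = ENNReal.ofReal (K * (t / s) ^ (q + β)) * (ENNReal.ofReal (s ^ β) * F s) := by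
        rw [← mul_assoc, ← ENNReal.ofReal_mul (by positivity), hsplit,
          ENNReal.ofReal_mul (by positivity), mul_assoc]

theorem union_Iic_Ici {A B d : ℝ} (hA : LowerDecayOn m A q (Iic d))
    (hB : LowerDecayOn m B q (Ici d)) (hA1 : 1 ≤ A) (hB1 : 1 ≤ B) :
    LowerDecayOn m (A * B) q univ := by
  have hA0 : 0 ≤ A := zero_le_one.trans hA1
  have hB0 : 0 ≤ B := zero_le_one.trans hB1
  intro s t hs hst _ _
  rcases le_total t d with htd | hdt
  · exact (hA.mono (le_mul_of_one_le_right hA0 hB1) le_rfl hA0) hs hst (hst.trans htd) htd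
  rcases le_total d s with hds | hsd
  · exact (hB.mono (le_mul_of_one_le_left hB0 hA1) le_rfl hB0) hs hst hds (hds.trans hst)
  have hd : 0 < d := hs.trans_le hsd
  have ht : 0 < t := hd.trans_le hdt
  calc m t ≤ ENNReal.ofReal (B * (t / d) ^ q) * m d := hB hd hdt self_mem_Ici hdt
    _ ≤ ENNReal.ofReal (B * (t / d) ^ q) * (ENNReal.ofReal (A * (d / s) ^ q) * m s) := by
        gcongr
        exact hA hs hsd hsd self_mem_Iic
    _ = ENNReal.ofReal (A * B * (t / s) ^ q) * m s := by
        rw [← mul_assoc, ← ENNReal.ofReal_mul (by positivity)]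
        congr 2
        rw [mul_mul_mul_comm, ← Real.mul_rpow (by positivity) (by positivity),
          div_mul_div_cancel₀ hd.ne']
        ring

end LowerDecayOn

theorem lowerDecayOn_ofReal_mul_const (a : ℝ) (c : ℝ≥0∞) (I : Set ℝ) :
    LowerDecayOn (fun r => ENNReal.ofReal (r * a) * c) 1 1 I := by
  intro s t hs hst _ _
  rw [one_mul, Real.rpow_one, ← mul_assoc,
    ← ENNReal.ofReal_mul (div_nonneg (hs.le.trans hst) hs.le)]
  refine le_of_eq ?_
  field_simp

theorem stmt13_general {W : Type*} [MetricSpace W] [MeasurableSpace W]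
    (μ : Measure W) (β Q : ℝ)
    (C Clow : ℝ) (hC : 1 ≤ C) (hClow : 1 ≤ Clow)
    (dB : W → ℝ)
    (F : W → ℝ → ℝ≥0∞) (G : W → ℝ≥0∞)
    (hF : ∀ (x : W) (r' r : ℝ), 0 < r' → r' ≤ r →
      F x r ≤ ENNReal.ofReal (Clow * (r / r') ^ Q) * F x r')
    (hbig : ∀ (x : W) (r : ℝ), 0 < r → dB x ≤ r →
      ENNReal.ofReal (r ^ β) * F x r ≤ ENNReal.ofReal C * μ (Metric.ball x r) ∧
        μ (Metric.ball x r) ≤ ENNReal.ofReal C * (ENNReal.ofReal (r ^ β) * F x r))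
    (hsmall : ∀ (x : W) (r : ℝ), 0 < r → r ≤ dB x →
      ENNReal.ofReal (r * dB x ^ (β - 1)) * G x ≤
          ENNReal.ofReal C * μ (Metric.ball x r) ∧
        μ (Metric.ball x r) ≤
          ENNReal.ofReal C * (ENNReal.ofReal (r * dB x ^ (β - 1)) * G x)) :
    ∃ C' : ℝ, 1 ≤ C' ∧ ∀ (x : W) (r' r : ℝ), 0 < r' → r' ≤ r →
      μ (Metric.ball x r) ≤
        ENNReal.ofReal (C' * (r / r') ^ max 1 (Q + β)) * μ (Metric.ball x r') := by
  have hC0 : 0 ≤ C := zero_le_one.trans hC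
  have hC2 : 1 ≤ C ^ 2 := one_le_pow₀ hC
  have hC2Clow : 1 ≤ C ^ 2 * Clow := one_le_mul_of_one_le_of_one_le hC2 hClow
  refine ⟨C ^ 2 * (C ^ 2 * Clow), one_le_mul_of_one_le_of_one_le hC2 hC2Clow,
    fun x s t hs hst => ?_⟩
  have hbelow : LowerDecayOn (fun r => μ (Metric.ball x r)) (C ^ 2) (max 1 (Q + β))
      (Iic (dB x)) :=
    ((lowerDecayOn_ofReal_mul_const _ _ _).of_comparable hC0 zero_le_one
      (fun r hr hr0 => (hsmall x r hr0 hr).1) (fun r hr hr0 => (hsmall x r hr0 hr).2)).mono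
      (mul_one _).le (le_max_left _ _) (by positivity)
  have habove : LowerDecayOn (fun r => μ (Metric.ball x r)) (C ^ 2 * Clow) (max 1 (Q + β))
      (Ici (dB x)) :=
    ((LowerDecayOn.rpow_mul (I := Ici (dB x)) (fun s t hs hst _ _ => hF x s t hs hst)
      (by positivity) β).of_comparable hC0 (by positivity)
      (fun r hr hr0 => (hbig x r hr0 hr).1) (fun r hr hr0 => (hbig x r hr0 hr).2)).mono
      le_rfl (le_max_right _ _) (by positivity)
  exact hbelow.union_Iic_Ici habove hC2 hC2Clow hs hst trivial trivial

/-- Transfer of relative lower volume decay to the uniformized filling: if `ν` (appearing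
through `F x r = ν(B_Z(z,r))`, `z` a nearest boundary point to `x`) has relative lower
volume decay of order `Q`, and the uniformized measure `μ_β` on `X̄_ρ` satisfies
`μ_β(B_ρ(x,r)) ≍ r^β F x r` when `r ≥ d_ρ(x)` and
`μ_β(B_ρ(x,r)) ≍ r · d_ρ(x)^{β-1} G x` (`G x = ν(B(v))`, `v` a nearest vertex) when
`r ≤ d_ρ(x)`, then `μ_β` has relative lower volume decay of order
`Q_β = max{1, Q + β}`. -/
theorem stmt13 {W : Type*} [MetricSpace W] [MeasurableSpace W]
    (μ : Measure W) (β Q : ℝ) (hβ : 0 < β) (hQ : 0 < Q)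
    (C Clow : ℝ) (hC : 1 ≤ C) (hClow : 1 ≤ Clow)
    (dB : W → ℝ) (hdB : ∀ x, 0 ≤ dB x)
    (F : W → ℝ → ℝ≥0∞) (G : W → ℝ≥0∞)
    (hF : ∀ (x : W) (r' r : ℝ), 0 < r' → r' ≤ r →
      F x r ≤ ENNReal.ofReal (Clow * (r / r') ^ Q) * F x r')
    (hbig : ∀ (x : W) (r : ℝ), 0 < r → dB x ≤ r →
      ENNReal.ofReal (r ^ β) * F x r ≤ ENNReal.ofReal C * μ (Metric.ball x r) ∧
        μ (Metric.ball x r) ≤ ENNReal.ofReal C * (ENNReal.ofReal (r ^ β) * F x r))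
    (hsmall : ∀ (x : W) (r : ℝ), 0 < r → r ≤ dB x →
      ENNReal.ofReal (r * dB x ^ (β - 1)) * G x ≤
          ENNReal.ofReal C * μ (Metric.ball x r) ∧
        μ (Metric.ball x r) ≤
          ENNReal.ofReal C * (ENNReal.ofReal (r * dB x ^ (β - 1)) * G x)) :
    ∃ C' : ℝ, 1 ≤ C' ∧ ∀ (x : W) (r' r : ℝ), 0 < r' → r' ≤ r →
      μ (Metric.ball x r) ≤
        ENNReal.ofReal (C' * (r / r') ^ max 1 (Q + β)) * μ (Metric.ball x r') :=
  stmt13_general μ β Q C Clow hC hClow dB F G hF hbig hsmall
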